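/- For every ordinal γ < κ, the set D²_γ = {p ∈ ℙ : γ ∈ U_p} is an open dense subset of ℙ (dense: for every p ∈ ℙ there is q ∈ D²_γ with q ≤ p; open: if p ∈ D²_γ and q ≤ p then q ∈ D²_γ). -/

import Mathlib

namespace JinShelah563

open Cardinal Set

/-- We work with ordinals in the lowest universe. -/
abbrev ONat := Ordinal.{0}

/-- A node of the big tree `ω₁^{<ω₁}` is coded by the graph of a function from an
initial segment of the ordinals into the ordinals. -/
abbrev Node := Set (ONat × ONat)

/-- The first uncountable ordinal. -/
noncomputable def ω1 : ONat := (Cardinal.aleph 1).ord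

/-- The restriction (initial segment) of a node to level `β`. -/
def nodeRestrict (x : Node) (β : ONat) : Node := {z ∈ x | z.1 < β}

/-- `x` is the graph of a function from a countable ordinal `β` into `ω₁`. -/
def IsNode (x : Node) : Prop :=
  (∀ z ∈ x, z.2 < ω1) ∧
  (∀ z ∈ x, ∀ w ∈ x, z.1 = w.1 → z.2 = w.2) ∧
  ∃ β, β < ω1 ∧ Prod.fst '' x = Set.Iio β

/-- The height (= domain) of a node. -/
noncomputable def nodeHt (x : Node) : ONat := sInf {β | Prod.fst '' x = Set.Iio β}

/-- A subtree of `ω₁^{<ω₁}`: a set of nodes closed under initial segments (the tree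
order is extension, i.e. `⊆` of graphs). -/
def IsTree (t : Set Node) : Prop :=
  (∀ x ∈ t, IsNode x) ∧ ∀ x ∈ t, ∀ β : ONat, nodeRestrict x β ∈ t

/-- The `α`-th level of a tree. -/
def level (t : Set Node) (α : ONat) : Set Node := {x ∈ t | nodeHt x = α}

/-- The height of a tree: the least `α` whose level is empty. -/
noncomputable def treeHt (t : Set Node) : ONat := sInf {α | level t α = ∅}

/-- `t↾α`, the set of nodes of `t` of height `< α`. -/
def restrictTree (t : Set Node) (α : ONat) : Set Node := {x ∈ t | nodeHt x < α}

/-- `t ≤_end t'` : `t'` end-extends `t`, i.e. `t'↾ht(t) = t`. -/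
def EndExtends (t t' : Set Node) : Prop := restrictTree t' (treeHt t) = t

/-- A normal tree: (i) every node extends to every higher nonempty level;
(ii) every node of a non-top level has two distinct extensions at a common level. -/
def IsNormalTree (t : Set Node) : Prop :=
  (∀ α β : ONat, α < β → β < treeHt t → ∀ x ∈ level t α, ∃ y ∈ level t β, x ⊆ y) ∧
  (∀ α : ONat, α + 1 < treeHt t → ∀ x ∈ level t α,
    ∃ β, β < treeHt t ∧ ∃ y₁ ∈ level t β, ∃ y₂ ∈ level t β, y₁ ≠ y₂ ∧ x ⊂ y₁ ∧ x ⊂ y₂)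

/-- `𝒯`: the countable normal trees. -/
def CNTree (t : Set Node) : Prop := IsTree t ∧ t.Countable ∧ IsNormalTree t

/-- `g` is the graph of a function with domain `dom`. -/
def IsFunGraph {A B : Type*} (g : Set (A × B)) (dom : Set A) : Prop :=
  (∀ z ∈ g, z.1 ∈ dom) ∧ ∀ a ∈ dom, ∃! y, (a, y) ∈ g

/-- The raw data of a condition `p = ⟨α_p, t_p, k_p, U_p, B_p, F_p⟩` of the forcing `ℙ`.
`B_p = {b γ : γ ∈ U}` (with `β γ = β^p_γ`) and `F_p = {f γ : γ ∈ U}` (with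
`δ γ = δ^p_γ`); `b γ` and `f γ` are coded as graphs of functions. -/
structure Cond where
  α : ONat
  t : Set Node
  k : Node → Set Node
  U : Set ONat
  b : ONat → Set (Node × Node)
  β : ONat → ONat
  f : ONat → Set (ONat × ONat)
  δ : ONat → ONat

/-- Membership in the forcing notion `ℙ` (relative to the inaccessible `κ`):
clauses (a)–(g) of the definition. -/
def IsCond (κ : Cardinal.{0}) (p : Cond) : Prop :=
  -- (a)
  p.α < ω1 ∧
  -- (b)
  CNTree p.t ∧ treeHt p.t = p.α + 1 ∧
  -- (c)
  (∀ x ∈ p.t, CNTree (p.k x) ∧ treeHt (p.k x) = nodeHt x + 1) ∧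
  (∀ x ∈ p.t, ∀ y ∈ p.t, x ⊂ y → EndExtends (p.k x) (p.k y)) ∧
  -- (d)
  (∀ γ ∈ p.U, γ < κ.ord) ∧ Cardinal.mk p.U ≤ Cardinal.aleph 1 ∧
  -- (e)
  (∀ γ ∈ p.U,
    p.β γ ≤ p.α ∧
    IsFunGraph (p.b γ) (restrictTree p.t (p.β γ + 1)) ∧
    (∀ x y, (x, y) ∈ p.b γ → y ∈ level (p.k x) (nodeHt x)) ∧
    (∀ x y x' y', (x, y) ∈ p.b γ → (x', y') ∈ p.b γ → x ⊆ x' → y ⊆ y')) ∧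
  -- (f)
  (∀ γ ∈ p.U,
    p.δ γ ≤ p.α ∧
    IsFunGraph (p.f γ) (Set.Iio (p.δ γ)) ∧
    ∀ z ∈ p.f γ, z.2 < γ) ∧
  -- (g)
  (∀ x ∈ restrictTree p.t p.α, ∀ U₀ : Set ONat, U₀ ⊆ p.U → U₀.Finite →
    ∀ ε : ONat, nodeHt x < ε → ε ≤ p.α →
    ∃ x' ∈ level p.t ε, x ⊂ x' ∧
      ∀ γ₁ ∈ U₀, ∀ γ₂ ∈ U₀,
        p.β γ₁ < ε ∨ p.β γ₂ < ε ∨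
        ∀ y₁ y₂ y₁' y₂', (x, y₁) ∈ p.b γ₁ → (x, y₂) ∈ p.b γ₂ →
          (x', y₁') ∈ p.b γ₁ → (x', y₂') ∈ p.b γ₂ → y₁ = y₂ → y₁' = y₂')

/-- The order of `ℙ`: `le p q` means `p ≤ q`, i.e. `p` is a stronger condition. -/
def le (p q : Cond) : Prop :=
  -- (1)
  q.α ≤ p.α ∧ EndExtends q.t p.t ∧ (∀ x ∈ q.t, p.k x = q.k x) ∧ q.U ⊆ p.U ∧
  -- (2)
  (∀ γ ∈ q.U, q.b γ ⊆ p.b γ ∧ q.f γ ⊆ p.f γ) ∧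
  -- (3)
  {γ | γ ∈ q.U ∧ q.β γ < p.β γ}.Countable ∧
  -- (4)
  {γ | γ ∈ q.U ∧ q.δ γ < p.δ γ}.Countable

/-! ### Auxiliary lemmas -/

lemma Iio_inj' {a b : ONat} (h : Set.Iio a = Set.Iio b) : a = b := by
  rcases lt_trichotomy a b with h1 | h1 | h1
  · have : a ∈ Set.Iio a := by rw [h]; exact h1
    exact absurd this (lt_irrefl a)
  · exact h1
  · have : b ∈ Set.Iio b := by rw [← h]; exact h1
    exact absurd this (lt_irrefl b)

lemma nodeHt_of_image {x : Node} {β : ONat} (h : Prod.fst '' x = Set.Iio β) :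
    nodeHt x = β := by
  have h1 : sInf {β : ONat | Prod.fst '' x = Set.Iio β} ∈ {β : ONat | Prod.fst '' x = Set.Iio β} :=
    csInf_mem ⟨β, h⟩
  exact Iio_inj' ((h1 : Prod.fst '' x = Set.Iio (nodeHt x)).symm.trans h)

lemma image_eq_Iio {x : Node} (hx : IsNode x) :
    Prod.fst '' x = Set.Iio (nodeHt x) := by
  obtain ⟨β, -, hβ⟩ := hx.2.2
  have h1 : sInf {β : ONat | Prod.fst '' x = Set.Iio β} ∈ {β : ONat | Prod.fst '' x = Set.Iio β} :=
    csInf_mem ⟨β, hβ⟩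
  exact h1

lemma nodeHt_empty : nodeHt (∅ : Node) = 0 :=
  nodeHt_of_image (by ext a; simp [not_lt_zero])

lemma eq_empty_of_ht_zero {x : Node} (hx : IsNode x) (h : nodeHt x = 0) : x = ∅ := by
  have him := image_eq_Iio hx
  rw [h] at him
  ext z
  simp only [Set.mem_empty_iff_false, iff_false]
  intro hz
  have : z.1 ∈ Prod.fst '' x := ⟨z, hz, rfl⟩
  rw [him] at this
  exact not_lt_zero (a := z.1) this

lemma succ_pos' {α : ONat} : (0 : ONat) < α + 1 :=
  lt_of_le_of_lt (zero_le (a := α))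
    (by rw [Ordinal.add_one_eq_succ]; exact Order.lt_succ α)

lemma level_treeHt_empty {t : Set Node} {α : ONat} (h : treeHt t = α + 1) :
    level t (α + 1) = ∅ := by
  have hne : {β : ONat | level t β = ∅}.Nonempty := by
    by_contra hn
    rw [Set.not_nonempty_iff_eq_empty] at hn
    have h0 : treeHt t = 0 := by unfold treeHt; rw [hn]; exact Ordinal.sInf_empty
    rw [h] at h0
    exact absurd (h0 ▸ succ_pos' (α := α)) (lt_irrefl 0)
  have hmem := csInf_mem hne
  have : treeHt t ∈ {β : ONat | level t β = ∅} := hmem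
  rwa [h] at this

lemma nodeHt_lt_treeHt {t : Set Node} {α : ONat} {x : Node} (htree : IsTree t)
    (h : treeHt t = α + 1) (hx : x ∈ t) : nodeHt x < α + 1 := by
  by_contra hlt
  push_neg at hlt
  have hn := htree.1 x hx
  have him := image_eq_Iio hn
  have hy : nodeRestrict x (α + 1) ∈ t := htree.2 x hx (α + 1)
  have himy : Prod.fst '' nodeRestrict x (α + 1) = Set.Iio (α + 1) := by
    ext a
    constructor
    · rintro ⟨z, ⟨hz, hzlt⟩, rfl⟩; exact hzlt
    · intro ha
      have haim : a ∈ Prod.fst '' x := by rw [him]; exact lt_of_lt_of_le ha hlt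
      obtain ⟨z, hz, rfl⟩ := haim
      exact ⟨z, ⟨hz, ha⟩, rfl⟩
  have hmem : nodeRestrict x (α + 1) ∈ level t (α + 1) := ⟨hy, nodeHt_of_image himy⟩
  rw [level_treeHt_empty h] at hmem
  exact hmem

lemma empty_mem_tree {t : Set Node} {α : ONat} (htree : IsTree t)
    (h : treeHt t = α + 1) : (∅ : Node) ∈ t := by
  have hne : level t 0 ≠ ∅ := by
    intro h0
    have hle : treeHt t ≤ 0 := csInf_le' h0
    rw [h] at hle
    exact absurd (lt_of_lt_of_le succ_pos' hle) (lt_irrefl 0)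
  obtain ⟨y, hyt, hyh⟩ := Set.nonempty_iff_ne_empty.mpr hne
  have := eq_empty_of_ht_zero (htree.1 y hyt) hyh
  rwa [this] at hyt

lemma restrict_one {t : Set Node} {α : ONat} (htree : IsTree t)
    (h : treeHt t = α + 1) : restrictTree t 1 = {(∅ : Node)} := by
  ext x
  constructor
  · rintro ⟨hxt, hlt⟩
    have h0 : nodeHt x = 0 := Ordinal.lt_one_iff_zero.mp hlt
    simp [eq_empty_of_ht_zero (htree.1 x hxt) h0]
  · intro hx
    rw [Set.mem_singleton_iff] at hx
    subst hx
    exact ⟨empty_mem_tree htree h, by rw [nodeHt_empty]; exact Ordinal.lt_one_iff_zero.mpr rfl⟩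

lemma restrict_self {t : Set Node} {α : ONat} (htree : IsTree t)
    (h : treeHt t = α + 1) : restrictTree t (treeHt t) = t := by
  ext x
  constructor
  · exact fun hx => hx.1
  · intro hx
    exact ⟨hx, by rw [h]; exact nodeHt_lt_treeHt htree h hx⟩

lemma le_refl_cond {κ : Cardinal.{0}} (p : Cond) (hp : IsCond κ p) : le p p := by
  refine ⟨le_rfl, restrict_self hp.2.1.1 hp.2.2.1, fun x _ => rfl, subset_rfl,
    fun γ' _ => ⟨subset_rfl, subset_rfl⟩, ?_, ?_⟩
  · exact Set.countable_empty.mono (fun a ha => absurd ha.2 (lt_irrefl _))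
  · exact Set.countable_empty.mono (fun a ha => absurd ha.2 (lt_irrefl _))

/-- For every `γ < κ`, the set `D²_γ = {p ∈ ℙ : γ ∈ U_p}` is dense and open in `ℙ`. -/
theorem statement1 (κ : Cardinal.{0}) (hκ : κ.IsInaccessible) (γ : ONat) (hγ : γ < κ.ord) :
    (∀ p : Cond, IsCond κ p → ∃ q : Cond, (IsCond κ q ∧ γ ∈ q.U) ∧ le q p) ∧
    (∀ p : Cond, (IsCond κ p ∧ γ ∈ p.U) → ∀ q : Cond, IsCond κ q → le q p →
      IsCond κ q ∧ γ ∈ q.U) := by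
  constructor
  · -- density
    intro p hp
    by_cases hmem : γ ∈ p.U
    · exact ⟨p, ⟨hp, hmem⟩, le_refl_cond p hp⟩
    · obtain ⟨ha, hb1, hb2, hc1, hc2, hd1, hd2, he, hf, hg⟩ := hp
      have htree : IsTree p.t := hb1.1
      refine ⟨⟨p.α, p.t, p.k, insert γ p.U,
          (fun γ' => if γ' = γ then {((∅ : Node), (∅ : Node))} else p.b γ'),
          (fun γ' => if γ' = γ then 0 else p.β γ'),
          (fun γ' => if γ' = γ then (∅ : Set (ONat × ONat)) else p.f γ'),
          (fun γ' => if γ' = γ then 0 else p.δ γ')⟩, ⟨?_, ?_⟩, ?_⟩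
      · -- IsCond
        refine ⟨ha, hb1, hb2, hc1, hc2, ?_, ?_, ?_, ?_, ?_⟩
        · -- (d1)
          intro γ' hγ'
          rcases Set.mem_insert_iff.mp hγ' with h' | h'
          · exact h' ▸ hγ
          · exact hd1 γ' h'
        · -- (d2)
          calc Cardinal.mk (insert γ p.U : Set ONat) = Cardinal.mk p.U + 1 :=
                Cardinal.mk_insert hmem
            _ ≤ Cardinal.aleph 1 + 1 := add_le_add_left hd2 1
            _ = Cardinal.aleph 1 := Cardinal.add_one_eq (Cardinal.aleph0_le_aleph 1)
        · -- (e)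
          intro γ' hγ'
          by_cases h' : γ' = γ
          · subst h'
            simp only [eq_self_iff_true, if_true]
            refine ⟨zero_le, ?_, ?_, ?_⟩
            · rw [zero_add, restrict_one htree hb2]
              constructor
              · intro z hz
                rw [Set.mem_singleton_iff] at hz
                rw [hz]
                exact Set.mem_singleton _
              · intro a ha
                rw [Set.mem_singleton_iff] at ha
                subst ha
                refine ⟨∅, Set.mem_singleton _, ?_⟩
                intro y hy
                rw [Set.mem_singleton_iff, Prod.mk.injEq] at hy
                exact hy.2
            · intro x y hxy
              rw [Set.mem_singleton_iff, Prod.mk.injEq] at hxy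
              obtain ⟨rfl, rfl⟩ := hxy
              have h0 : (∅ : Node) ∈ p.t := empty_mem_tree htree hb2
              have hk := hc1 ∅ h0
              exact ⟨empty_mem_tree hk.1.1 hk.2, rfl⟩
            · intro x y x' y' hxy hxy' _
              rw [Set.mem_singleton_iff, Prod.mk.injEq] at hxy hxy'
              rw [hxy.2, hxy'.2]
          · simp only [if_neg h']
            exact he γ' (Or.resolve_left (Set.mem_insert_iff.mp hγ') h')
        · -- (f)
          intro γ' hγ'
          by_cases h' : γ' = γ
          · subst h'
            simp only [eq_self_iff_true, if_true]
            refine ⟨zero_le, ⟨?_, ?_⟩, ?_⟩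
            · intro z hz; exact absurd hz (Set.notMem_empty z)
            · intro a ha; exact absurd ha (not_lt_zero (a := a))
            · intro z hz; exact absurd hz (Set.notMem_empty z)
          · simp only [if_neg h']
            exact hf γ' (Or.resolve_left (Set.mem_insert_iff.mp hγ') h')
        · -- (g)
          intro x hx U₀ hsub hfin ε hε hεα
          obtain ⟨x', hx', hxx', hkey⟩ :=
            hg x hx (U₀ \ {γ})
              (fun a ha => Or.resolve_left (Set.mem_insert_iff.mp (hsub ha.1)) ha.2)
              hfin.diff ε hε hεα
          refine ⟨x', hx', hxx', ?_⟩
          intro γ₁ h1 γ₂ h2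
          by_cases e1 : γ₁ = γ
          · left
            simp only [if_pos e1]
            exact lt_of_le_of_lt (zero_le) hε
          by_cases e2 : γ₂ = γ
          · right; left
            simp only [if_pos e2]
            exact lt_of_le_of_lt (zero_le) hε
          · have hres := hkey γ₁ ⟨h1, e1⟩ γ₂ ⟨h2, e2⟩
            simp only [if_neg e1, if_neg e2]
            exact hres
      · -- γ ∈ U_q
        exact Set.mem_insert γ p.U
      · -- le q p
        refine ⟨le_rfl, restrict_self htree hb2, fun x _ => rfl,
          Set.subset_insert γ p.U, ?_, ?_, ?_⟩
        · intro γ' hγ'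
          have hne : γ' ≠ γ := fun h => hmem (h ▸ hγ')
          simp only [if_neg hne]
          exact ⟨subset_rfl, subset_rfl⟩
        · apply Set.countable_empty.mono
          intro a ha
          exfalso
          have hne : a ≠ γ := fun h => hmem (h ▸ ha.1)
          have h2 := ha.2
          simp only [if_neg hne] at h2
          exact lt_irrefl _ h2
        · apply Set.countable_empty.mono
          intro a ha
          exfalso
          have hne : a ≠ γ := fun h => hmem (h ▸ ha.1)
          have h2 := ha.2
          simp only [if_neg hne] at h2
          exact lt_irrefl _ h2
  · -- openness
    intro p hp q hq hle
    exact ⟨hq, hle.2.2.2.1 hp.2⟩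

end JinShelah563
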